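/- Let Π_t be the orthogonal projection onto the span of the eigenvectors of tρ − σ with nonnegative eigenvalues, where ρ = Σ_i λ_i |x_i⟩⟨x_i| and σ = Σ_j μ_j |y_j⟩⟨y_j| are density matrices on ℂ^d with orthonormal eigenbases. Then for every α ∈ [0,1], every t' ≥ 0 and every δ ≥ 0, with t = δ·t', the optimal type-II error satisfies β_α(ρ,σ) ≥ Σ_{i,j} min(t'·λ_i, μ_j)·( |⟨x_i| Π_t |y_j⟩|² + δ·|⟨x_i| (I − Π_t) |y_j⟩|² ) − δ·t'·α. -/

import Mathlib

open Matrix BigOperators ComplexOrder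

noncomputable section

/-- The optimal quantum type-II error trade-off. -/
def qBeta {d : ℕ} (α : ℝ) (ρ σ : Matrix (Fin d) (Fin d) ℂ) : ℝ :=
  sInf { b : ℝ | ∃ T : Matrix (Fin d) (Fin d) ℂ,
    T.PosSemidef ∧ (1 - T).PosSemidef ∧ ((T * ρ).trace.re ≤ α) ∧
    b = 1 - (T * σ).trace.re }

/-- The orthogonal projection onto the span of the eigenvectors of a Hermitian
matrix `A` with nonnegative eigenvalues (defined as `0` if `A` is not Hermitian). -/
def nonnegProj {d : ℕ} (A : Matrix (Fin d) (Fin d) ℂ) : Matrix (Fin d) (Fin d) ℂ :=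
  if hA : A.IsHermitian then
    (hA.eigenvectorUnitary : Matrix (Fin d) (Fin d) ℂ) *
      Matrix.diagonal (fun i => if 0 ≤ hA.eigenvalues i then (1 : ℂ) else 0) *
      star (hA.eigenvectorUnitary : Matrix (Fin d) (Fin d) ℂ)
  else 0

/-! Let `A = tρ - σ` with eigenvalues `a_k`, and `Π = Π_t`. For a test `T` with `Tr[Tρ] ≤ α`, the
complement `Q = 1 - T` satisfies `0 ⪯ Q ⪯ 1`, so in the eigenbasis of `A` the diagonal of `Q` lies
in `[0, 1]`, whence `Tr[QA] ≤ Σ max(a_k, 0) = Tr[ΠA]` (Neyman–Pearson). As `ρ` and `σ` have unit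
trace, this rearranges to `1 - Tr[Tσ] ≥ Tr[Πσ] + t·Tr[(1 - Π)ρ] - tα`. Expanding `σ` and `ρ` in
their eigenbases and using Parseval together with `Π² = Π = Π*` gives
`Tr[Πσ] = Σ μ_j |⟨x_i|Π|y_j⟩|²` and `Tr[(1 - Π)ρ] = Σ λ_i |⟨x_i|(1 - Π)|y_j⟩|²`; replacing `μ_j`
and `t'λ_i` by their minimum only decreases the sum. -/

open Unitary

namespace Matrix

variable {n ι : Type*} [Fintype n] [Fintype ι]

lemma trace_conjStarAlgAut [DecidableEq n] (U : unitaryGroup n ℂ) (X : Matrix n n ℂ) :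
    (conjStarAlgAut ℂ _ U X).trace = X.trace := by
  rw [conjStarAlgAut_apply, trace_mul_cycle, coe_star_mul_self, Matrix.one_mul]

lemma PosSemidef.conjStarAlgAut [DecidableEq n] {X : Matrix n n ℂ} (hX : X.PosSemidef)
    (U : unitaryGroup n ℂ) :
    (conjStarAlgAut ℂ _ U X).PosSemidef := by
  rw [conjStarAlgAut_apply, star_eq_conjTranspose]
  exact hX.mul_mul_conjTranspose_same _

lemma isStarProjection_diagonal [DecidableEq n] {f : n → ℂ} (hf : ∀ i, IsStarProjection (f i)) :
    IsStarProjection (diagonal f) where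
  isIdempotentElem := by
    rw [IsIdempotentElem, diagonal_mul_diagonal]
    exact congrArg diagonal (funext fun i => (hf i).isIdempotentElem.eq)
  isSelfAdjoint := by
    rw [IsSelfAdjoint, star_eq_conjTranspose, diagonal_conjTranspose]
    exact congrArg diagonal (funext fun i => (hf i).isSelfAdjoint.star_eq)

lemma re_trace_mul_diagonal_le_sum_max [DecidableEq n] {M : Matrix n n ℂ} (hM : M.PosSemidef)
    (hM1 : (1 - M).PosSemidef) (e : n → ℝ) :
    (M * diagonal (RCLike.ofReal ∘ e)).trace.re ≤ ∑ k, max (e k) 0 := by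
  have htrace : (M * diagonal (RCLike.ofReal ∘ e)).trace.re = ∑ k, (M k k).re * e k := by
    simp [trace, mul_diagonal, Complex.re_sum]
  rw [htrace]
  refine Finset.sum_le_sum fun k _ => ?_
  have h0 : 0 ≤ (M k k).re := (Complex.nonneg_iff.mp hM.diag_nonneg).1
  have h1 : (M k k).re ≤ 1 := by
    simpa using (Complex.nonneg_iff.mp (hM1.diag_nonneg (i := k))).1
  rcases le_total 0 (e k) with hk | hk
  · rw [max_eq_left hk]; nlinarith
  · rw [max_eq_right hk]; nlinarith

lemma re_star_dotProduct_self (w : n → ℂ) : (star w ⬝ᵥ w).re = ∑ i, Complex.normSq (w i) := by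
  simp [dotProduct, Complex.re_sum, Complex.normSq_apply, Complex.mul_re]

lemma sum_normSq_star_dotProduct [DecidableEq n] {x : n → n → ℂ}
    (hx : ∀ i j, star (x i) ⬝ᵥ x j = if i = j then 1 else 0) (w : n → ℂ) :
    ∑ i, Complex.normSq (star (x i) ⬝ᵥ w) = (star w ⬝ᵥ w).re := by
  set B : Matrix n n ℂ := of fun i => star (x i)
  have hBB : Bᴴ * B = 1 := by
    refine mul_eq_one_comm.mp (ext fun i j => ?_)
    simpa [B, mul_apply, dotProduct, one_apply] using hx i j
  calc ∑ i, Complex.normSq (star (x i) ⬝ᵥ w) = (star (B *ᵥ w) ⬝ᵥ (B *ᵥ w)).re := by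
        rw [re_star_dotProduct_self]; rfl
    _ = (star w ⬝ᵥ w).re := by
        rw [star_mulVec, ← dotProduct_mulVec, mulVec_mulVec, hBB, one_mulVec]

lemma star_mulVec_dotProduct_mulVec_of_isStarProjection {P : Matrix n n ℂ}
    (hP : IsStarProjection P) (v : n → ℂ) :
    star (P *ᵥ v) ⬝ᵥ (P *ᵥ v) = star v ⬝ᵥ (P *ᵥ v) := by
  rw [star_mulVec, ← dotProduct_mulVec, mulVec_mulVec, ← star_eq_conjTranspose,
    hP.isSelfAdjoint.star_eq, hP.isIdempotentElem.eq]

lemma normSq_star_dotProduct_mulVec_comm {C : Matrix n n ℂ} (hC : IsSelfAdjoint C)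
    (u v : n → ℂ) :
    Complex.normSq (star u ⬝ᵥ (C *ᵥ v)) = Complex.normSq (star v ⬝ᵥ (C *ᵥ u)) := by
  rw [star_dotProduct, Complex.star_def, Complex.normSq_conj, star_mulVec, ← dotProduct_mulVec,
    ← star_eq_conjTranspose, hC.star_eq]

lemma re_trace_mul_sum_smul_vecMulVec (M : Matrix n n ℂ) (mu : ι → ℝ) (y : ι → n → ℂ) :
    (M * ∑ j, (mu j : ℂ) • vecMulVec (y j) (star (y j))).trace.re =
      ∑ j, mu j * (star (y j) ⬝ᵥ (M *ᵥ y j)).re := by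
  simp [Matrix.mul_sum, trace_sum, mul_vecMulVec, Complex.re_sum, dotProduct_comm]

lemma re_trace_mul_eq_sum_mul_sum_normSq [DecidableEq n] {P : Matrix n n ℂ}
    (hP : IsStarProjection P) {x : n → n → ℂ}
    (hx : ∀ i j, star (x i) ⬝ᵥ x j = if i = j then 1 else 0)
    (mu : ι → ℝ) (y : ι → n → ℂ) :
    (P * ∑ j, (mu j : ℂ) • vecMulVec (y j) (star (y j))).trace.re =
      ∑ j, mu j * ∑ i, Complex.normSq (star (x i) ⬝ᵥ (P *ᵥ y j)) := by
  simp only [re_trace_mul_sum_smul_vecMulVec, sum_normSq_star_dotProduct hx,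
    star_mulVec_dotProduct_mulVec_of_isStarProjection hP]

end Matrix

lemma sum_sum_min_mul_add_le {ι κ : Type*} [Fintype ι] [Fintype κ] (f : ι → ℝ) (g : κ → ℝ)
    {a b : ι → κ → ℝ} (ha : ∀ i j, 0 ≤ a i j) (hb : ∀ i j, 0 ≤ b i j) :
    ∑ i, ∑ j, min (f i) (g j) * (a i j + b i j) ≤
      ∑ j, g j * ∑ i, a i j + ∑ i, f i * ∑ j, b i j := by
  simp only [Finset.mul_sum]
  rw [Finset.sum_comm (f := fun j i => g j * a i j), ← Finset.sum_add_distrib]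
  gcongr with i _
  rw [← Finset.sum_add_distrib]
  gcongr with j _
  rw [mul_add]
  gcongr
  exacts [ha i j, min_le_right _ _, hb i j, min_le_left _ _]

section nonnegProj

variable {d : ℕ} {A : Matrix (Fin d) (Fin d) ℂ}

lemma nonnegProj_eq_conjStarAlgAut (hA : A.IsHermitian) :
    nonnegProj A = conjStarAlgAut ℂ _ hA.eigenvectorUnitary
      (diagonal fun i => if 0 ≤ hA.eigenvalues i then 1 else 0) := by
  rw [nonnegProj, dif_pos hA]
  rfl

lemma isStarProjection_nonnegProj (hA : A.IsHermitian) : IsStarProjection (nonnegProj A) := by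
  rw [nonnegProj_eq_conjStarAlgAut hA]
  refine (isStarProjection_diagonal fun i => ?_).map _
  split_ifs
  exacts [.one ℂ, .zero ℂ]

lemma re_trace_nonnegProj_mul (hA : A.IsHermitian) :
    (nonnegProj A * A).trace.re = ∑ k, max (hA.eigenvalues k) 0 := by
  set φ := conjStarAlgAut ℂ _ hA.eigenvectorUnitary
  have hPA : nonnegProj A * A = φ (diagonal fun k => ((max (hA.eigenvalues k) 0 : ℝ) : ℂ)) := by
    calc nonnegProj A * A = φ (diagonal fun i => if 0 ≤ hA.eigenvalues i then 1 else 0) *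
          φ (diagonal (RCLike.ofReal ∘ hA.eigenvalues)) := by
          rw [nonnegProj_eq_conjStarAlgAut hA, ← hA.spectral_theorem]
      _ = _ := by
          rw [← map_mul, diagonal_mul_diagonal]
          congr 2 with k
          split_ifs with hk <;> simp [hk, le_of_not_ge]
  rw [hPA, trace_conjStarAlgAut, trace_diagonal, Complex.re_sum]
  simp

lemma re_trace_mul_le_re_trace_nonnegProj_mul (hA : A.IsHermitian) {Q : Matrix (Fin d) (Fin d) ℂ}
    (hQ : Q.PosSemidef) (hQ1 : (1 - Q).PosSemidef) :
    (Q * A).trace.re ≤ (nonnegProj A * A).trace.re := by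
  set φ := conjStarAlgAut ℂ _ hA.eigenvectorUnitary
  have hQA : Q * A = φ (φ.symm Q * diagonal (RCLike.ofReal ∘ hA.eigenvalues)) := by
    rw [map_mul, StarAlgEquiv.apply_symm_apply, ← hA.spectral_theorem]
  have hM : (φ.symm Q).PosSemidef := by
    rw [conjStarAlgAut_symm]
    exact hQ.conjStarAlgAut _
  have hM1 : (1 - φ.symm Q).PosSemidef := by
    rw [← map_one φ.symm, ← map_sub, conjStarAlgAut_symm]
    exact hQ1.conjStarAlgAut _
  rw [hQA, trace_conjStarAlgAut, re_trace_nonnegProj_mul hA]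
  exact re_trace_mul_diagonal_le_sum_max hM hM1 _

end nonnegProj

lemma re_trace_mul_smul_sub {d : ℕ} (X ρ σ : Matrix (Fin d) (Fin d) ℂ) (t : ℝ) :
    (X * (t • ρ - σ)).trace.re = t * (X * ρ).trace.re - (X * σ).trace.re := by
  simp [Matrix.mul_sub, trace_sub]

lemma le_qBeta {d : ℕ} {ρ σ : Matrix (Fin d) (Fin d) ℂ} (hρ : ρ.IsHermitian) (hρtr : ρ.trace = 1)
    (hσ : σ.IsHermitian) (hσtr : σ.trace = 1) {α : ℝ} (hα : 0 ≤ α) {t : ℝ} (ht : 0 ≤ t) :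
    (nonnegProj (t • ρ - σ) * σ).trace.re + t * ((1 - nonnegProj (t • ρ - σ)) * ρ).trace.re
      - t * α ≤ qBeta α ρ σ := by
  have hA : (t • ρ - σ).IsHermitian := (hρ.smul (IsSelfAdjoint.all t)).sub hσ
  refine le_csInf ⟨1, 0, .zero, by simpa using PosSemidef.one, by simpa using hα, by simp⟩ ?_
  rintro _ ⟨T, hT, hT1, hTα, rfl⟩
  have hNP := re_trace_mul_le_re_trace_nonnegProj_mul hA hT1 (by simpa using hT)
  simp only [re_trace_mul_smul_sub, Matrix.sub_mul, Matrix.one_mul, trace_sub, trace_smul,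
    Complex.sub_re, Complex.smul_re, hρtr, hσtr, Complex.one_re, smul_eq_mul] at hNP ⊢
  linarith [mul_le_mul_of_nonneg_left hTα ht]

/-- Inequality (12): for `t = δ·t'`,
`β_α(ρ,σ) ≥ Σ_{i,j} min(t'λ_i, μ_j)(|⟨x_i|Π_t|y_j⟩|² + δ|⟨x_i|(I−Π_t)|y_j⟩|²) − δt'α`. -/
theorem lower_bound_min_form {d : ℕ} (ρ σ : Matrix (Fin d) (Fin d) ℂ)
    (hρ : ρ.PosSemidef) (hρtr : ρ.trace = 1)
    (hσ : σ.PosSemidef) (hσtr : σ.trace = 1)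
    (lam mu : Fin d → ℝ) (x y : Fin d → (Fin d → ℂ))
    (hx : ∀ i j, star (x i) ⬝ᵥ x j = if i = j then 1 else 0)
    (hy : ∀ i j, star (y i) ⬝ᵥ y j = if i = j then 1 else 0)
    (hρdec : ρ = ∑ i, (lam i : ℂ) • vecMulVec (x i) (star (x i)))
    (hσdec : σ = ∑ j, (mu j : ℂ) • vecMulVec (y j) (star (y j)))
    (α : ℝ) (hα : α ∈ Set.Icc (0 : ℝ) 1)
    (t' δ t : ℝ) (ht' : 0 ≤ t') (hδ : 0 ≤ δ) (ht : t = δ * t') :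
    (∑ i, ∑ j, min (t' * lam i) (mu j) *
        (Complex.normSq (star (x i) ⬝ᵥ (nonnegProj (t • ρ - σ) *ᵥ y j))
          + δ * Complex.normSq (star (x i) ⬝ᵥ ((1 - nonnegProj (t • ρ - σ)) *ᵥ y j))))
      - δ * t' * α ≤ qBeta α ρ σ := by
  have hA : (t • ρ - σ).IsHermitian := (hρ.1.smul (IsSelfAdjoint.all t)).sub hσ.1
  set P := nonnegProj (t • ρ - σ)
  have hP : IsStarProjection P := isStarProjection_nonnegProj hA
  have hPσ : (P * σ).trace.re = ∑ j, mu j * ∑ i, Complex.normSq (star (x i) ⬝ᵥ (P *ᵥ y j)) := by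
    rw [hσdec]
    exact re_trace_mul_eq_sum_mul_sum_normSq hP hx mu y
  have hCρ : ((1 - P) * ρ).trace.re =
      ∑ i, lam i * ∑ j, Complex.normSq (star (x i) ⬝ᵥ ((1 - P) *ᵥ y j)) := by
    rw [hρdec, re_trace_mul_eq_sum_mul_sum_normSq hP.one_sub hy lam x]
    simp only [normSq_star_dotProduct_mulVec_comm hP.one_sub.isSelfAdjoint (y _)]
  calc _ ≤ (∑ j, mu j * ∑ i, Complex.normSq (star (x i) ⬝ᵥ (P *ᵥ y j)) +
          ∑ i, t' * lam i * ∑ j, δ * Complex.normSq (star (x i) ⬝ᵥ ((1 - P) *ᵥ y j)))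
          - δ * t' * α := by
        gcongr
        exact sum_sum_min_mul_add_le _ _ (fun _ _ => Complex.normSq_nonneg _)
          (fun _ _ => mul_nonneg hδ (Complex.normSq_nonneg _))
    _ = (P * σ).trace.re + t * ((1 - P) * ρ).trace.re - t * α := by
        rw [hPσ, hCρ, ht, Finset.mul_sum]
        congr 2
        refine Finset.sum_congr rfl fun i _ => ?_
        simp only [Finset.mul_sum]
        exact Finset.sum_congr rfl fun j _ => by ring
    _ ≤ qBeta α ρ σ := le_qBeta hρ.1 hρtr hσ.1 hσtr hα.1 (ht ▸ mul_nonneg hδ ht')
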